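/- arXiv:2112.14204 — 4 statements merged into one kernel-verified Lean document; each statement's English description precedes it below -/
import Mathlib

section
/- For any X ∈ ℝ^{nd×Kd}, the maximum of tr(XᵀV) over V ∈ F equals the maximum of ⟨H, μ(X)⟩ = Σ_{i,j} H_{ij}·μ(X)_{ij} over clustering matrices H ∈ 𝓗. Consequently, a maximizer of tr(XᵀV) over F is obtained by taking a maximizer H of ⟨H, μ(X)⟩ over 𝓗 and, for each i, setting the unique nonzero block of the i-th block row of V to be a maximizer of ⟨X_{ie_i}, Q⟩ over Q ∈ O(d), where e_i is the column with H_{ie_i} = 1. -/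
open Matrix BigOperators Finset

/-- Frobenius norm of a real matrix. -/
noncomputable def frobNorm {a b : Type*} [Fintype a] [Fintype b]
    (X : Matrix a b ℝ) : ℝ :=
  Real.sqrt (∑ i, ∑ j, X i j ^ 2)

/-- `Q` belongs to the real orthogonal group `O(d)`. -/
def IsOrthoMat {d : ℕ} (Q : Matrix (Fin d) (Fin d) ℝ) : Prop :=
  Q * Qᵀ = 1 ∧ Qᵀ * Q = 1

/-- `Q` belongs to the special orthogonal group `SO(d)`. -/
def IsSpecOrthoMat {d : ℕ} (Q : Matrix (Fin d) (Fin d) ℝ) : Prop :=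
  IsOrthoMat Q ∧ Q.det = 1

/-- The `(i,j)`-th `d × d` block of a block matrix. -/
def blockOf {n K d : ℕ} (X : Matrix (Fin n × Fin d) (Fin K × Fin d) ℝ)
    (i : Fin n) (j : Fin K) : Matrix (Fin d) (Fin d) ℝ :=
  fun a b => X (i, a) (j, b)

/-- The singular values of a real `d × d` matrix: square roots of the
eigenvalues of the Gram matrix `Xᴴ X`. -/
noncomputable def singVals {d : ℕ} (X : Matrix (Fin d) (Fin d) ℝ) : Fin d → ℝ :=
  fun k => Real.sqrt ((Matrix.isHermitian_conjTranspose_mul_self X).eigenvalues k)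

/-- Nuclear norm: the sum of the singular values. -/
noncomputable def nuclearNorm {d : ℕ} (X : Matrix (Fin d) (Fin d) ℝ) : ℝ :=
  ∑ k, singVals X k

/-- The map `μ` sending `X` to its `n × K` matrix of blockwise nuclear norms. -/
noncomputable def muMap {n K d : ℕ} (X : Matrix (Fin n × Fin d) (Fin K × Fin d) ℝ) :
    Matrix (Fin n) (Fin K) ℝ :=
  fun i j => nuclearNorm (blockOf X i j)

/-- `H` is a clustering matrix: 0/1 entries, each row sums to 1, each column sums to `m`. -/
def IsClusteringMatrix {n K : ℕ} (m : ℕ) (H : Matrix (Fin n) (Fin K) ℝ) : Prop :=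
  (∀ i j, H i j = 0 ∨ H i j = 1) ∧ (∀ i, ∑ j, H i j = 1) ∧ (∀ j, ∑ i, H i j = (m : ℝ))

/-- `V = (1_{1×K} ⊗ R) ⊙ (H ⊗ 1_{d×d})`: the `(i,j)`-th `d × d` block is `H i j • R i`. -/
def buildV {n K d : ℕ} (R : Fin n → Matrix (Fin d) (Fin d) ℝ)
    (H : Matrix (Fin n) (Fin K) ℝ) : Matrix (Fin n × Fin d) (Fin K × Fin d) ℝ :=
  fun p q => H p.1 q.1 * R p.1 p.2 q.2

/-- Membership in the set `F` (resp. `E` if `G = SO(d)`): `V` is built from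
blocks `R i ∈ G` and a clustering matrix `H`. -/
def InFeas {n K d : ℕ} (m : ℕ) (G : Matrix (Fin d) (Fin d) ℝ → Prop)
    (V : Matrix (Fin n × Fin d) (Fin K × Fin d) ℝ) : Prop :=
  ∃ (R : Fin n → Matrix (Fin d) (Fin d) ℝ) (H : Matrix (Fin n) (Fin K) ℝ),
    (∀ i, G (R i)) ∧ IsClusteringMatrix m H ∧ V = buildV R H

/-- Membership in `F`: blocks in `O(d)`. -/
def InF {n K d : ℕ} (m : ℕ) (V : Matrix (Fin n × Fin d) (Fin K × Fin d) ℝ) : Prop :=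
  InFeas m IsOrthoMat V

/-- Membership in `P_K(G)`: `M = bdiag(U₁,…,U_K) (P ⊗ I_d)` with `U_k ∈ G`
and `P` a permutation matrix, i.e. the `(a,b)` block of `M` is `U a` if `a = π b`, else `0`. -/
def InPK {K d : ℕ} (G : Matrix (Fin d) (Fin d) ℝ → Prop)
    (M : Matrix (Fin K × Fin d) (Fin K × Fin d) ℝ) : Prop :=
  ∃ (U : Fin K → Matrix (Fin d) (Fin d) ℝ) (π : Equiv.Perm (Fin K)),
    (∀ k, G (U k)) ∧ ∀ p q, M p q = if p.1 = π q.1 then U p.1 p.2 q.2 else 0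

/-- `dist_G(V₁,V₂) = min_{Q ∈ P_K(G)} ‖V₁ - V₂ Q‖_F` (the minimum is attained
since `P_K(G)` is compact; we express it as an infimum). -/
noncomputable def distG {n K d : ℕ} (G : Matrix (Fin d) (Fin d) ℝ → Prop)
    (V₁ V₂ : Matrix (Fin n × Fin d) (Fin K × Fin d) ℝ) : ℝ :=
  sInf {r | ∃ Q, InPK G Q ∧ r = frobNorm (V₁ - V₂ * Q)}

/-- Estimation error `ε_G(V)` with respect to a ground truth `Vstar`. -/
noncomputable def epsG {n K d : ℕ} (G : Matrix (Fin d) (Fin d) ℝ → Prop)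
    (Vstar V : Matrix (Fin n × Fin d) (Fin K × Fin d) ℝ) : ℝ :=
  distG G V Vstar

/-!
Blockwise, `tr (Xᵀ V) = ∑ i j, H i j * tr ((X_ij)ᵀ R i)`, so everything reduces to the fact
that the maximum of `tr (Aᵀ P)` over orthogonal `P` is the nuclear norm of `A`. Diagonalising
`Aᵀ A` by an orthogonal `V`, the columns `b k` of `A V` are pairwise orthogonal with
`‖b k‖ = √λ k`. For orthogonal `P` the columns `p k` of `P V` are unit vectors, so by
Cauchy–Schwarz `tr (Aᵀ P) = ∑ k, ⟪b k, p k⟫ ≤ ∑ k, √λ k`; equality holds when the `p k`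
extend the normalised nonzero `b k` to an orthonormal basis. Hence `tr (Xᵀ V) ≤ ⟨H, μ X⟩` on
`F`, with equality for the blocks `Q i` of the statement.
-/

open RealInnerProductSpace

theorem exists_orthonormalBasis_inner_eq_norm {ι E : Type*} [Fintype ι] [NormedAddCommGroup E]
    [InnerProductSpace ℝ E] [FiniteDimensional ℝ E] (hcard : Module.finrank ℝ E = Fintype.card ι)
    {w : ι → E} (hw : Pairwise fun j k => ⟪w j, w k⟫ = 0) :
    ∃ c : OrthonormalBasis ι ℝ E, ∀ k, ⟪w k, c k⟫ = ‖w k‖ := by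
  classical
  have hs : Orthonormal ℝ ({k | w k ≠ 0}.domRestrict fun k => ‖w k‖⁻¹ • w k) := by
    refine ⟨fun k => norm_smul_inv_norm k.2, fun j k hjk => ?_⟩
    simp only [Set.domRestrict_apply, real_inner_smul_left, real_inner_smul_right,
      hw (Subtype.coe_ne_coe.mpr hjk), mul_zero]
  obtain ⟨c, hc⟩ := hs.exists_orthonormalBasis_extension_of_card_eq hcard
  refine ⟨c, fun k => ?_⟩
  by_cases hk : w k = 0
  · simp [hk]
  · rw [hc k hk, real_inner_smul_right, real_inner_self_eq_norm_sq]
    field_simp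

section Columns

variable {m n : Type*} [Fintype m]

lemma inner_toLp_transpose (B P : Matrix m n ℝ) (j k : n) :
    ⟪WithLp.toLp 2 (Bᵀ j), WithLp.toLp 2 (Pᵀ k)⟫ = (Bᵀ * P) j k := by
  simp [EuclideanSpace.inner_toLp_toLp, Matrix.mul_apply, dotProduct, mul_comm]

lemma trace_transpose_mul_eq_sum_inner [Fintype n] (B P : Matrix m n ℝ) :
    (Bᵀ * P).trace = ∑ k, ⟪WithLp.toLp 2 (Bᵀ k), WithLp.toLp 2 (Pᵀ k)⟫ := by
  simp [Matrix.trace, inner_toLp_transpose]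

lemma norm_toLp_transpose_eq_sqrt [DecidableEq n] {B : Matrix m n ℝ} {lam : n → ℝ}
    (hB : Bᵀ * B = diagonal lam) (k : n) :
    ‖WithLp.toLp 2 (Bᵀ k)‖ = √(lam k) := by
  rw [norm_eq_sqrt_real_inner, inner_toLp_transpose, hB, diagonal_apply_eq]

variable [Fintype n] [DecidableEq n] {lam : n → ℝ}

theorem trace_transpose_mul_le_sum_sqrt {B P : Matrix m n ℝ} (hB : Bᵀ * B = diagonal lam)
    (hP : Pᵀ * P = 1) :
    (Bᵀ * P).trace ≤ ∑ k, √(lam k) := by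
  rw [trace_transpose_mul_eq_sum_inner]
  refine Finset.sum_le_sum fun k _ => (real_inner_le_norm _ _).trans_eq ?_
  rw [norm_toLp_transpose_eq_sqrt hB,
    norm_toLp_transpose_eq_sqrt (lam := 1) (hP.trans diagonal_one.symm),
    Pi.one_apply, Real.sqrt_one, mul_one]

theorem exists_orthogonal_trace_transpose_mul_eq_sum_sqrt {B : Matrix n n ℝ}
    (hB : Bᵀ * B = diagonal lam) :
    ∃ U : Matrix n n ℝ, Uᵀ * U = 1 ∧ (Bᵀ * U).trace = ∑ k, √(lam k) := by
  have horth : Pairwise fun j k => ⟪WithLp.toLp 2 (Bᵀ j), WithLp.toLp 2 (Bᵀ k)⟫ = 0 :=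
    fun j k hjk => (inner_toLp_transpose B B j k).trans (by rw [hB, diagonal_apply_ne _ hjk])
  obtain ⟨c, hc⟩ := exists_orthonormalBasis_inner_eq_norm (by simp) horth
  set U : Matrix n n ℝ := (Matrix.of fun k i => c k i)ᵀ
  have hU : ∀ k, WithLp.toLp 2 (Uᵀ k) = c k := fun k => rfl
  refine ⟨U, ?_, ?_⟩
  · ext j k
    rw [← inner_toLp_transpose, hU, hU, one_apply]
    exact orthonormal_iff_ite.mp c.orthonormal j k
  · simp only [trace_transpose_mul_eq_sum_inner, hU, hc, norm_toLp_transpose_eq_sqrt hB]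

end Columns

section Orthogonal

variable {m n : Type*} [Fintype m] [Fintype n] [DecidableEq n]

lemma trace_transpose_mul_mul_of_mul_transpose_eq_one {V : Matrix n n ℝ} (hV : V * Vᵀ = 1)
    (A P : Matrix m n ℝ) : ((A * V)ᵀ * (P * V)).trace = (Aᵀ * P).trace := by
  rw [transpose_mul, Matrix.mul_assoc, ← Matrix.mul_assoc Aᵀ, trace_mul_comm, Matrix.mul_assoc,
    hV, Matrix.mul_one]

lemma transpose_mul_self_mul_eq_one {P : Matrix m n ℝ} {V : Matrix n n ℝ} (hP : Pᵀ * P = 1)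
    (hV : Vᵀ * V = 1) : (P * V)ᵀ * (P * V) = 1 := by
  rw [transpose_mul, Matrix.mul_assoc, ← Matrix.mul_assoc Pᵀ, hP, Matrix.one_mul, hV]

theorem exists_orthogonal_transpose_mul_self_mul_eq_diagonal (A : Matrix m n ℝ) :
    ∃ V : Matrix n n ℝ, Vᵀ * V = 1 ∧ V * Vᵀ = 1 ∧
      (A * V)ᵀ * (A * V) = diagonal (isHermitian_conjTranspose_mul_self A).eigenvalues := by
  set hA := isHermitian_conjTranspose_mul_self A
  refine ⟨hA.eigenvectorUnitary, ?_, ?_, ?_⟩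
  · simpa [star_eq_conjTranspose] using Unitary.coe_star_mul_self hA.eigenvectorUnitary
  · simpa [star_eq_conjTranspose] using Unitary.coe_mul_star_self hA.eigenvectorUnitary
  · have := hA.conjStarAlgAut_star_eigenvectorUnitary
    simp only [Unitary.conjStarAlgAut_star_apply, star_eq_conjTranspose] at this
    simpa [transpose_mul, Matrix.mul_assoc] using this

end Orthogonal

section NuclearNorm

variable {d : ℕ}

lemma isOrthoMat_iff_transpose_mul_self {P : Matrix (Fin d) (Fin d) ℝ} :
    IsOrthoMat P ↔ Pᵀ * P = 1 :=
  ⟨And.right, fun h => ⟨mul_eq_one_comm.mp h, h⟩⟩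

theorem trace_transpose_mul_le_nuclearNorm (A : Matrix (Fin d) (Fin d) ℝ)
    {P : Matrix (Fin d) (Fin d) ℝ} (hP : IsOrthoMat P) : (Aᵀ * P).trace ≤ nuclearNorm A := by
  obtain ⟨V, hV, hV', hAV⟩ := exists_orthogonal_transpose_mul_self_mul_eq_diagonal A
  rw [← trace_transpose_mul_mul_of_mul_transpose_eq_one hV']
  exact trace_transpose_mul_le_sum_sqrt hAV (transpose_mul_self_mul_eq_one hP.2 hV)

theorem exists_isOrthoMat_trace_transpose_mul_eq_nuclearNorm (A : Matrix (Fin d) (Fin d) ℝ) :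
    ∃ P, IsOrthoMat P ∧ (Aᵀ * P).trace = nuclearNorm A := by
  obtain ⟨V, hV, hV', hAV⟩ := exists_orthogonal_transpose_mul_self_mul_eq_diagonal A
  obtain ⟨U, hU, hAVU⟩ := exists_orthogonal_trace_transpose_mul_eq_sum_sqrt hAV
  refine ⟨U * Vᵀ, isOrthoMat_iff_transpose_mul_self.mpr ?_, ?_⟩
  · exact transpose_mul_self_mul_eq_one hU (by rwa [transpose_transpose])
  · rw [← trace_transpose_mul_mul_of_mul_transpose_eq_one hV', Matrix.mul_assoc, hV,
      Matrix.mul_one, hAVU]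
    rfl

theorem IsOrthoMat.trace_transpose_mul_eq_nuclearNorm_of_forall_le
    {A Q : Matrix (Fin d) (Fin d) ℝ} (hQ : IsOrthoMat Q)
    (hmax : ∀ P, IsOrthoMat P → (Aᵀ * P).trace ≤ (Aᵀ * Q).trace) :
    (Aᵀ * Q).trace = nuclearNorm A := by
  obtain ⟨P, hP, hAP⟩ := exists_isOrthoMat_trace_transpose_mul_eq_nuclearNorm A
  exact (trace_transpose_mul_le_nuclearNorm A hQ).antisymm (hAP ▸ hmax P hP)

end NuclearNorm

section Clustering

variable {n K d m : ℕ}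

lemma IsClusteringMatrix.nonneg {H : Matrix (Fin n) (Fin K) ℝ} (hH : IsClusteringMatrix m H)
    (i : Fin n) (j : Fin K) : 0 ≤ H i j := by
  rcases hH.1 i j with h | h <;> simp [h]

lemma IsClusteringMatrix.eq_zero_of_ne {H : Matrix (Fin n) (Fin K) ℝ}
    (hH : IsClusteringMatrix m H) {i : Fin n} {k j : Fin K} (hk : H i k = 1) (hj : j ≠ k) :
    H i j = 0 := by
  have hrest : ∑ j ∈ univ.erase k, H i j = 0 := by
    have := hH.2.1 i
    rw [← add_sum_erase _ _ (mem_univ k), hk] at this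
    linarith
  exact (sum_eq_zero_iff_of_nonneg fun j _ => hH.nonneg i j).mp hrest j
    (mem_erase.mpr ⟨hj, mem_univ j⟩)

lemma IsClusteringMatrix.sum_mul_eq {H : Matrix (Fin n) (Fin K) ℝ} (hH : IsClusteringMatrix m H)
    {i : Fin n} {k : Fin K} (hk : H i k = 1) (f : Fin K → ℝ) : ∑ j, H i j * f j = f k := by
  rw [sum_eq_single k (fun j _ hj => by rw [hH.eq_zero_of_ne hk hj, zero_mul])
    (fun h => absurd (mem_univ k) h), hk, one_mul]

lemma trace_transpose_mul_buildV (X : Matrix (Fin n × Fin d) (Fin K × Fin d) ℝ)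
    (R : Fin n → Matrix (Fin d) (Fin d) ℝ) (H : Matrix (Fin n) (Fin K) ℝ) :
    (Xᵀ * buildV R H).trace = ∑ i, ∑ j, H i j * ((blockOf X i j)ᵀ * R i).trace := by
  simp only [trace, Matrix.diag, mul_apply, transpose_apply, buildV, blockOf,
    Fintype.sum_prod_type, mul_sum]
  refine (sum_congr rfl fun _ _ => sum_comm).trans (sum_comm.trans ?_)
  simp only [mul_left_comm]

lemma trace_transpose_mul_buildV_le (X : Matrix (Fin n × Fin d) (Fin K × Fin d) ℝ)
    {R : Fin n → Matrix (Fin d) (Fin d) ℝ} {H : Matrix (Fin n) (Fin K) ℝ}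
    (hR : ∀ i, IsOrthoMat (R i)) (hH : IsClusteringMatrix m H) :
    (Xᵀ * buildV R H).trace ≤ ∑ i, ∑ j, H i j * muMap X i j := by
  rw [trace_transpose_mul_buildV]
  gcongr with i _ j _
  · exact hH.nonneg i j
  · exact trace_transpose_mul_le_nuclearNorm _ (hR i)

lemma trace_transpose_mul_buildV_eq (X : Matrix (Fin n × Fin d) (Fin K × Fin d) ℝ)
    {R : Fin n → Matrix (Fin d) (Fin d) ℝ} {H : Matrix (Fin n) (Fin K) ℝ} {e : Fin n → Fin K}
    (hH : IsClusteringMatrix m H) (he : ∀ i, H i (e i) = 1)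
    (hR : ∀ i, ((blockOf X i (e i))ᵀ * R i).trace = muMap X i (e i)) :
    (Xᵀ * buildV R H).trace = ∑ i, ∑ j, H i j * muMap X i j := by
  rw [trace_transpose_mul_buildV]
  refine sum_congr rfl fun i _ => ?_
  rw [hH.sum_mul_eq (he i), hH.sum_mul_eq (he i), hR]

end Clustering

theorem stmt5_general {n K d m : ℕ}
    (X : Matrix (Fin n × Fin d) (Fin K × Fin d) ℝ)
    (H : Matrix (Fin n) (Fin K) ℝ) (e : Fin n → Fin K)
    (Q : Fin n → Matrix (Fin d) (Fin d) ℝ)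
    (hH : IsClusteringMatrix m H)
    (hHmax : ∀ H', IsClusteringMatrix m H' →
      ∑ i, ∑ j, H' i j * muMap X i j ≤ ∑ i, ∑ j, H i j * muMap X i j)
    (he : ∀ i, H i (e i) = 1)
    (hQ : ∀ i, IsOrthoMat (Q i))
    (hQmax : ∀ i, ∀ P, IsOrthoMat P →
      ((blockOf X i (e i))ᵀ * P).trace ≤ ((blockOf X i (e i))ᵀ * Q i).trace) :
    sSup {t | ∃ V, InF m V ∧ t = (Xᵀ * V).trace}
      = sSup {t | ∃ H', IsClusteringMatrix m H' ∧ t = ∑ i, ∑ j, H' i j * muMap X i j} ∧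
    InF m (buildV Q H) ∧
    (∀ W, InF m W → (Xᵀ * W).trace ≤ (Xᵀ * buildV Q H).trace) := by
  have hopt : (Xᵀ * buildV Q H).trace = ∑ i, ∑ j, H i j * muMap X i j :=
    trace_transpose_mul_buildV_eq X hH he fun i =>
      (hQ i).trace_transpose_mul_eq_nuclearNorm_of_forall_le (hQmax i)
  have hInF : InF m (buildV Q H) := ⟨Q, H, hQ, hH, rfl⟩
  have hub : ∀ W, InF m W → (Xᵀ * W).trace ≤ (Xᵀ * buildV Q H).trace := by
    rintro W ⟨R, H', hR, hH', rfl⟩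
    exact hopt ▸ (trace_transpose_mul_buildV_le X hR hH').trans (hHmax H' hH')
  have hmaxF : IsGreatest {t | ∃ V, InF m V ∧ t = (Xᵀ * V).trace} (Xᵀ * buildV Q H).trace :=
    ⟨⟨_, hInF, rfl⟩, by rintro t ⟨W, hW, rfl⟩; exact hub W hW⟩
  have hmaxH : IsGreatest {t | ∃ H', IsClusteringMatrix m H' ∧ t = ∑ i, ∑ j, H' i j * muMap X i j}
      (∑ i, ∑ j, H i j * muMap X i j) :=
    ⟨⟨H, hH, rfl⟩, by rintro t ⟨H', hH', rfl⟩; exact hHmax H' hH'⟩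
  exact ⟨hmaxF.csSup_eq.trans (hopt.trans hmaxH.csSup_eq.symm), hInF, hub⟩

/-- the maximum of `tr(Xᵀ V)` over `V ∈ F` equals the maximum of
`⟨H, μ(X)⟩` over clustering matrices `H ∈ 𝓗`; moreover, given a maximizer `H`
of `⟨·, μ(X)⟩` over `𝓗` (with `e i` the column where row `i` of `H` equals 1)
and, for each `i`, a maximizer `Q i` of `⟨X_{i e_i}, ·⟩` over `O(d)`, the matrix
`V ∈ F` built from `H` and the blocks `Q i` maximizes `tr(Xᵀ V)` over `F`. -/
theorem stmt5 {n K d m : ℕ} (hm : 0 < m) (hn : n = K * m)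
    (X : Matrix (Fin n × Fin d) (Fin K × Fin d) ℝ)
    (H : Matrix (Fin n) (Fin K) ℝ) (e : Fin n → Fin K)
    (Q : Fin n → Matrix (Fin d) (Fin d) ℝ)
    (hH : IsClusteringMatrix m H)
    (hHmax : ∀ H', IsClusteringMatrix m H' →
      ∑ i, ∑ j, H' i j * muMap X i j ≤ ∑ i, ∑ j, H i j * muMap X i j)
    (he : ∀ i, H i (e i) = 1)
    (hQ : ∀ i, IsOrthoMat (Q i))
    (hQmax : ∀ i, ∀ P, IsOrthoMat P →
      ((blockOf X i (e i))ᵀ * P).trace ≤ ((blockOf X i (e i))ᵀ * Q i).trace) :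
    sSup {t | ∃ V, InF m V ∧ t = (Xᵀ * V).trace}
      = sSup {t | ∃ H', IsClusteringMatrix m H' ∧ t = ∑ i, ∑ j, H' i j * muMap X i j} ∧
    InF m (buildV Q H) ∧
    (∀ W, InF m W → (Xᵀ * W).trace ≤ (Xᵀ * buildV Q H).trace) :=
  stmt5_general X H e Q hH hHmax he hQ hQmax
end

section
/- Let X = η·R where η > 0 and R ∈ O(d). Then for any X' ∈ ℝ^{d×d} and any P' minimizing ‖X' − Q‖_F over Q ∈ O(d), one has ‖R − P'‖_F ≤ (2/η)·‖X − X'‖_F. (Note that R itself is the unique minimizer of ‖X − Q‖_F over Q ∈ O(d).) -/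
open Matrix BigOperators Finset

/-! Every `Q ∈ O(d)` has Frobenius norm `√d`, so on `O(d)` we have
`‖Y - Q‖² = ‖Y‖² - 2⟪Y, Q⟫ + d`: a nearest point to `Y` in `O(d)` is a maximizer of `⟪Y, ·⟫`,
which is unchanged when `Y` is scaled by `η⁻¹ > 0`. Hence `P'` is also nearest to `η⁻¹ X'`, and as
`R ∈ O(d)` the triangle inequality gives
`‖R - P'‖ ≤ ‖R - η⁻¹ X'‖ + ‖η⁻¹ X' - P'‖ ≤ 2 ‖R - η⁻¹ X'‖ = (2/η) ‖X - X'‖`. -/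

theorem IsMinOn.dist_smul_of_forall_norm_eq {E : Type*} [NormedAddCommGroup E]
    [InnerProductSpace ℝ E] {S : Set E} {r : ℝ} (hS : ∀ q ∈ S, ‖q‖ = r) {x p : E}
    (hp : p ∈ S) (hmin : IsMinOn (dist x) S p) {c : ℝ} (hc : 0 < c) :
    IsMinOn (dist (c • x)) S p := by
  intro q hq
  have dist_sq_sub : ∀ y, dist y q ^ 2 - dist y p ^ 2 = 2 * (inner ℝ y p - inner ℝ y q) := by
    intro y
    rw [dist_eq_norm, dist_eq_norm, norm_sub_sq_real, norm_sub_sq_real, hS q hq, hS p hp]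
    ring
  have hinner : inner ℝ x q ≤ inner ℝ x p := by
    nlinarith [dist_sq_sub x, pow_le_pow_left₀ dist_nonneg (hmin hq) 2]
  have hc_sub := dist_sq_sub (c • x)
  rw [real_inner_smul_left, real_inner_smul_left] at hc_sub
  refine (pow_le_pow_iff_left₀ dist_nonneg dist_nonneg two_ne_zero).1 ?_
  nlinarith [mul_le_mul_of_nonneg_left hinner hc.le]

theorem dist_le_two_mul_dist_of_isMinOn {α : Type*} [PseudoMetricSpace α] {S : Set α}
    {y p q : α} (hq : q ∈ S) (hmin : IsMinOn (dist y) S p) : dist q p ≤ 2 * dist q y :=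
  calc dist q p ≤ dist q y + dist y p := dist_triangle q y p
    _ ≤ dist q y + dist y q := add_le_add_right (hmin hq) _
    _ = 2 * dist q y := by rw [dist_comm y q]; ring

def frobVec {m n : Type*} [Fintype m] [Fintype n] :
    Matrix m n ℝ →ₗ[ℝ] EuclideanSpace ℝ (m × n) where
  toFun X := WithLp.toLp 2 (Function.uncurry X)
  map_add' _ _ := rfl
  map_smul' _ _ := rfl

@[simp]
theorem frobVec_apply {m n : Type*} [Fintype m] [Fintype n] (X : Matrix m n ℝ) (p : m × n) :
    frobVec X p = X p.1 p.2 :=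
  rfl

theorem frobNorm_eq_norm_frobVec {m n : Type*} [Fintype m] [Fintype n] (X : Matrix m n ℝ) :
    frobNorm X = ‖frobVec X‖ := by
  simp [frobNorm, EuclideanSpace.norm_eq, Fintype.sum_prod_type, sq_abs]

theorem IsOrthoMat.frobNorm_eq {d : ℕ} {Q : Matrix (Fin d) (Fin d) ℝ} (hQ : IsOrthoMat Q) :
    frobNorm Q = √d := by
  have h := congrArg Matrix.trace hQ.1
  simp only [Matrix.trace, Matrix.diag, Matrix.mul_apply, Matrix.transpose_apply] at h
  simp [frobNorm, sq, h]

/-- if `X = η • R` with `η > 0` and `R ∈ O(d)`, and `P'` is a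
minimizer of `‖X' - Q‖_F` over `Q ∈ O(d)`, then `‖R - P'‖_F ≤ (2/η) ‖X - X'‖_F`. -/
theorem stmt9 {d : ℕ} (η : ℝ) (hη : 0 < η) (R : Matrix (Fin d) (Fin d) ℝ)
    (hR : IsOrthoMat R) (X X' P' : Matrix (Fin d) (Fin d) ℝ)
    (hX : X = η • R) (hP' : IsOrthoMat P')
    (hmin : ∀ Q, IsOrthoMat Q → frobNorm (X' - P') ≤ frobNorm (X' - Q)) :
    frobNorm (R - P') ≤ (2 / η) * frobNorm (X - X') := by
  set S := frobVec '' {Q : Matrix (Fin d) (Fin d) ℝ | IsOrthoMat Q}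
  have hS : ∀ q ∈ S, ‖q‖ = √d := by
    rintro _ ⟨Q, hQ, rfl⟩
    rw [← frobNorm_eq_norm_frobVec, hQ.frobNorm_eq]
  have hminS : IsMinOn (dist (frobVec X')) S (frobVec P') := by
    rintro _ ⟨Q, hQ, rfl⟩
    simpa [dist_eq_norm, ← map_sub, ← frobNorm_eq_norm_frobVec] using hmin Q hQ
  have hmin' := hminS.dist_smul_of_forall_norm_eq hS ⟨P', hP', rfl⟩ (inv_pos.2 hη)
  have hR' : frobVec R - η⁻¹ • frobVec X' = η⁻¹ • frobVec (X - X') := by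
    rw [hX, map_sub, map_smul, smul_sub, smul_smul, inv_mul_cancel₀ hη.ne', one_smul]
  calc frobNorm (R - P') = dist (frobVec R) (frobVec P') := by
        rw [dist_eq_norm, ← map_sub, frobNorm_eq_norm_frobVec]
    _ ≤ 2 * dist (frobVec R) (η⁻¹ • frobVec X') :=
        dist_le_two_mul_dist_of_isMinOn (Set.mem_image_of_mem frobVec hR) hmin'
    _ = (2 / η) * frobNorm (X - X') := by
        rw [dist_eq_norm, hR', norm_smul, Real.norm_of_nonneg (inv_nonneg.2 hη.le),
          ← frobNorm_eq_norm_frobVec, div_eq_mul_inv, mul_assoc]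
end

section
/- Let V* ∈ E, V ∈ F, let ρ > 0, and let Q be a minimizer of ‖V − V*·Q'‖_F over Q' ∈ P_K(O(d)). Set Z = (1/m)·(V*Q)ᵀ·V ∈ ℝ^{Kd×Kd}. If ‖V − V*Q‖_F ≤ √m/ρ, then m·‖Z − I_{Kd}‖_F ≤ (1/2)·√(1 + 1/d)·(√m/ρ)·‖V − V*Q‖_F. -/
open Matrix BigOperators Finset

/-!
Write `W = V* Q` and `M = Wᵀ V`. Both `W` and `V` are block matrices whose `(i, k)` block is
`H i k • T i k` with `H` a clustering matrix and `T i k` orthogonal, so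
`‖W‖² = ‖V‖² = K m d` and `‖V - W‖² = 2 (K m d - tr M)`.

Right-multiplying `Q` by `bdiag(1, …, O, …, 1)` keeps it in `P_K(O(d))` and does not change
`‖V* Q‖`, so minimality of `Q` says that each diagonal block `M_kk` maximizes `tr (Oᵀ M_kk)` over
orthogonal `O`; testing this on products of two Householder reflections shows that `M_kk` is
symmetric. With the cluster overlaps `c = Hᵀ H'`, one has `xᵀ M_kk x ≤ c_kk |x|² ≤ m |x|²`, so
`m I - M_kk` is positive semidefinite and `‖M_kk - m I‖ ≤ tr (m I - M_kk) =: δ_k`, while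
`d (m - c_kk) ≤ δ_k`. Each off-diagonal block has `‖M_kl‖ ≤ c_kl √d`, and
`∑_{l ≠ k} c_kl = m - c_kk`.
Summing, `‖M - m I‖² ≤ (1 + 1/d) ∑ δ_k² ≤ (1 + 1/d) (‖V - W‖² / 2)²`, and the smallness assumption
turns one factor `‖V - W‖` into `√m / ρ`.
-/

section FrobeniusNorm

variable {ι κ : Type*} [Fintype ι] [Fintype κ]

lemma frobNorm_nonneg (X : Matrix ι κ ℝ) : 0 ≤ frobNorm X := Real.sqrt_nonneg _

lemma frobNorm_sq (X : Matrix ι κ ℝ) : frobNorm X ^ 2 = ∑ i, ∑ j, X i j ^ 2 :=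
  Real.sq_sqrt (by positivity)

lemma frobNorm_sq_eq_trace (X : Matrix ι κ ℝ) : frobNorm X ^ 2 = trace (Xᵀ * X) := by
  rw [frobNorm_sq, trace, Finset.sum_comm]
  simp [mul_apply, sq]

lemma frobNorm_sub_sq (A B : Matrix ι κ ℝ) :
    frobNorm (A - B) ^ 2 = frobNorm A ^ 2 + frobNorm B ^ 2 - 2 * trace (Bᵀ * A) := by
  simp only [frobNorm_sq_eq_trace, transpose_sub, Matrix.sub_mul, Matrix.mul_sub, trace_sub]
  rw [← trace_transpose (Aᵀ * B), transpose_mul, transpose_transpose]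
  ring

lemma frobNorm_neg (X : Matrix ι κ ℝ) : frobNorm (-X) = frobNorm X := by
  simp [frobNorm]

section MathlibNorm

attribute [local instance] Matrix.frobeniusNormedAddCommGroup Matrix.frobeniusNormedSpace

lemma frobNorm_eq_norm (X : Matrix ι κ ℝ) : frobNorm X = ‖X‖ := by
  simp [frobNorm, frobenius_norm_def, Real.sqrt_eq_rpow]

lemma frobNorm_smul (c : ℝ) (X : Matrix ι κ ℝ) : frobNorm (c • X) = |c| * frobNorm X := by
  simp only [frobNorm_eq_norm, norm_smul, Real.norm_eq_abs]

lemma frobNorm_sum_le {α : Type*} (s : Finset α) (X : α → Matrix ι κ ℝ) :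
    frobNorm (∑ a ∈ s, X a) ≤ ∑ a ∈ s, frobNorm (X a) := by
  simp only [frobNorm_eq_norm]
  exact norm_sum_le s X

end MathlibNorm

end FrobeniusNorm

section Quadratic

variable {ι : Type*} [Fintype ι]

lemma dotProduct_self_nonneg (v : ι → ℝ) : 0 ≤ v ⬝ᵥ v :=
  Finset.sum_nonneg fun i _ => mul_self_nonneg (v i)

lemma dotProduct_self_pos {v : ι → ℝ} (hv : v ≠ 0) : 0 < v ⬝ᵥ v :=
  (dotProduct_self_nonneg v).lt_of_ne (Ne.symm (dotProduct_self_eq_zero.not.mpr hv))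

lemma dotProduct_mulVec_smul_single_add_single [DecidableEq ι] (N : Matrix ι ι ℝ) (s : ℝ)
    (i j : ι) :
    (s • Pi.single i 1 + Pi.single j 1) ⬝ᵥ N *ᵥ (s • Pi.single i 1 + Pi.single j 1)
      = N i i * (s * s) + (N i j + N j i) * s + N j j := by
  simp [mulVec_add, mulVec_smul]
  ring

lemma sq_apply_le_mul_diag {P : Matrix ι ι ℝ} (hsymm : P.IsSymm)
    (hpos : ∀ x, 0 ≤ x ⬝ᵥ P *ᵥ x) (i j : ι) : P i j ^ 2 ≤ P i i * P j j := by
  classical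
  have hdisc := discrim_le_zero fun s : ℝ => by
    have := hpos (s • (Pi.single i 1 : ι → ℝ) + Pi.single j 1)
    rwa [dotProduct_mulVec_smul_single_add_single, hsymm.apply i j] at this
  rw [discrim] at hdisc
  nlinarith

lemma frobNorm_sq_le_trace_sq {P : Matrix ι ι ℝ} (hsymm : P.IsSymm)
    (hpos : ∀ x, 0 ≤ x ⬝ᵥ P *ᵥ x) : frobNorm P ^ 2 ≤ trace P ^ 2 := by
  rw [frobNorm_sq, sq, trace, Finset.sum_mul_sum]
  exact Finset.sum_le_sum fun i _ => Finset.sum_le_sum fun j _ =>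
    sq_apply_le_mul_diag hsymm hpos i j

lemma trace_le_of_dotProduct_mulVec_le {N : Matrix ι ι ℝ} {c : ℝ}
    (h : ∀ x, x ⬝ᵥ N *ᵥ x ≤ c * (x ⬝ᵥ x)) : trace N ≤ c * Fintype.card ι := by
  classical
  calc trace N = ∑ i, N i i := rfl
    _ ≤ ∑ _ : ι, c := Finset.sum_le_sum fun i _ => by simpa using h (Pi.single i 1)
    _ = c * Fintype.card ι := by simp [mul_comm]

lemma frobNorm_sub_smul_one_sq_le [DecidableEq ι] {N : Matrix ι ι ℝ}
    {c : ℝ} (hsymm : N.IsSymm) (h : ∀ x, x ⬝ᵥ N *ᵥ x ≤ c * (x ⬝ᵥ x)) :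
    frobNorm (N - c • 1) ^ 2 ≤ (c * Fintype.card ι - trace N) ^ 2 := by
  have hsymm' : (c • 1 - N).IsSymm := ((isSymm_one.smul c).sub hsymm)
  have hpos : ∀ x, 0 ≤ x ⬝ᵥ (c • 1 - N) *ᵥ x := fun x => by
    simp only [sub_mulVec, smul_mulVec, one_mulVec, dotProduct_sub, dotProduct_smul, smul_eq_mul]
    linarith [h x]
  have := frobNorm_sq_le_trace_sq hsymm' hpos
  rwa [← frobNorm_neg, neg_sub, trace_sub, trace_smul, trace_one, smul_eq_mul] at this

end Quadratic

section Householder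

variable {ι : Type*} [Fintype ι] [DecidableEq ι]

noncomputable def householder (v : ι → ℝ) : Matrix ι ι ℝ :=
  1 - (2 / (v ⬝ᵥ v)) • vecMulVec v v

lemma householder_transpose (v : ι → ℝ) : (householder v)ᵀ = householder v := by
  simp [householder]

lemma householder_mul_self {v : ι → ℝ} (hv : v ≠ 0) : householder v * householder v = 1 := by
  have hvv : v ⬝ᵥ v ≠ 0 := dotProduct_self_eq_zero.not.mpr hv
  simp only [householder, Matrix.sub_mul, Matrix.mul_sub, Matrix.one_mul, Matrix.mul_one,
    Matrix.smul_mul, Matrix.mul_smul, vecMulVec_mul_vecMulVec, vecMulVec_smul]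
  rw [smul_smul, div_mul_cancel₀ _ hvv]
  module

lemma householder_mulVec (v y : ι → ℝ) :
    householder v *ᵥ y = y - (2 / (v ⬝ᵥ v) * (v ⬝ᵥ y)) • v := by
  simp [householder, sub_mulVec, Matrix.smul_mulVec, vecMulVec_mulVec, smul_smul]

lemma trace_householder_mul (v : ι → ℝ) (N : Matrix ι ι ℝ) :
    trace (householder v * N) = trace N - 2 / (v ⬝ᵥ v) * (v ⬝ᵥ N *ᵥ v) := by
  simp [householder, Matrix.sub_mul, vecMulVec_mul, dotProduct_mulVec, dotProduct_comm v (v ᵥ* N)]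

end Householder

namespace IsOrthoMat

variable {d : ℕ} {A B : Matrix (Fin d) (Fin d) ℝ}

lemma mul (hA : IsOrthoMat A) (hB : IsOrthoMat B) : IsOrthoMat (A * B) := by
  constructor
  · rw [transpose_mul, Matrix.mul_assoc, ← Matrix.mul_assoc B, hB.1, Matrix.one_mul, hA.1]
  · rw [transpose_mul, Matrix.mul_assoc, ← Matrix.mul_assoc Aᵀ, hA.2, Matrix.one_mul, hB.2]

lemma transpose (hA : IsOrthoMat A) : IsOrthoMat Aᵀ := by
  simpa [IsOrthoMat, and_comm] using hA

lemma frobNorm_sq (hA : IsOrthoMat A) : frobNorm A ^ 2 = d := by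
  simp [frobNorm_sq_eq_trace, hA.2]

lemma dotProduct_mulVec_transpose_mul_le (hA : IsOrthoMat A) (hB : IsOrthoMat B)
    (x : Fin d → ℝ) : x ⬝ᵥ (Aᵀ * B) *ᵥ x ≤ x ⬝ᵥ x := by
  have hnorm : ∀ {C : Matrix (Fin d) (Fin d) ℝ}, IsOrthoMat C → (C *ᵥ x) ⬝ᵥ (C *ᵥ x) = x ⬝ᵥ x :=
    fun hC => by rw [dotProduct_mulVec, ← mulVec_transpose, mulVec_mulVec, hC.2, one_mulVec]
  have hsq := dotProduct_self_nonneg (A *ᵥ x - B *ᵥ x)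
  rw [← mulVec_mulVec, dotProduct_mulVec, ← mulVec_transpose, transpose_transpose]
  simp only [sub_dotProduct, dotProduct_sub, hnorm hA, hnorm hB, dotProduct_comm (B *ᵥ x)] at hsq
  linarith

lemma frobNorm_eq_s11 (hA : IsOrthoMat A) : frobNorm A = √d := by
  rw [← hA.frobNorm_sq, Real.sqrt_sq (frobNorm_nonneg A)]

end IsOrthoMat

section TraceMaximal

variable {d : ℕ} {N : Matrix (Fin d) (Fin d) ℝ}

lemma isOrthoMat_householder {v : Fin d → ℝ} (hv : v ≠ 0) : IsOrthoMat (householder v) := by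
  simp only [IsOrthoMat, householder_transpose, householder_mul_self hv, and_self]

/-- Trace maximality tested on the rotation `householder u * householder v`. -/
lemma two_mul_dotProduct_mul_le_of_trace_le
    (hmax : ∀ O, IsOrthoMat O → trace (Oᵀ * N) ≤ trace N)
    {u v : Fin d → ℝ} (hu : u ≠ 0) (hv : v ≠ 0) :
    2 * (u ⬝ᵥ v) * (u ⬝ᵥ N *ᵥ v)
      ≤ (v ⬝ᵥ v) * (u ⬝ᵥ N *ᵥ u) + (u ⬝ᵥ u) * (v ⬝ᵥ N *ᵥ v) := by
  have hu' := dotProduct_self_pos hu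
  have hv' := dotProduct_self_pos hv
  have h := hmax _ ((isOrthoMat_householder hu).mul (isOrthoMat_householder hv))
  rw [transpose_mul, householder_transpose, householder_transpose, Matrix.mul_assoc,
    trace_householder_mul, ← mulVec_mulVec, householder_mulVec, trace_householder_mul] at h
  simp only [dotProduct_sub, dotProduct_smul, smul_eq_mul] at h
  have hscale : (u ⬝ᵥ u) * (v ⬝ᵥ v) / 2 * (2 / (u ⬝ᵥ u) * (u ⬝ᵥ N *ᵥ u)
      + 2 / (v ⬝ᵥ v) * (v ⬝ᵥ N *ᵥ v - 2 / (u ⬝ᵥ u) * (u ⬝ᵥ N *ᵥ v) * (v ⬝ᵥ u)))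
      = (v ⬝ᵥ v) * (u ⬝ᵥ N *ᵥ u) + (u ⬝ᵥ u) * (v ⬝ᵥ N *ᵥ v)
        - 2 * (u ⬝ᵥ v) * (u ⬝ᵥ N *ᵥ v) := by
    rw [dotProduct_comm v u]
    field_simp
    ring
  nlinarith [mul_pos hu' hv']

lemma isSymm_of_trace_le (hmax : ∀ O, IsOrthoMat O → trace (Oᵀ * N) ≤ trace N) :
    N.IsSymm := by
  refine IsSymm.ext fun a b => ?_
  by_cases hab : a = b
  · rw [hab]
  have key : ∀ t : ℝ, 0 ≤ N a a + N b b + t * (N b a - N a b) := fun t => by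
    have h := two_mul_dotProduct_mul_le_of_trace_le hmax (u := Pi.single a 1)
      (v := t • Pi.single a 1 + Pi.single b 1) (by simp)
      (fun h => by simpa [hab, Ne.symm hab] using congrFun h b)
    simp [mulVec_add, mulVec_smul, hab, Ne.symm hab] at h
    linear_combination h
  by_contra hne
  have := key (-(N a a + N b b + 1) / (N b a - N a b))
  rw [div_mul_cancel₀ _ (sub_ne_zero.mpr hne)] at this
  linarith

end TraceMaximal

namespace IsClusteringMatrix

variable {n K m : ℕ} {H : Matrix (Fin n) (Fin K) ℝ}

lemma nonneg_s11 (hH : IsClusteringMatrix m H) (i : Fin n) (k : Fin K) : 0 ≤ H i k := by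
  rcases hH.1 i k with h | h <;> simp [h]

lemma le_one (hH : IsClusteringMatrix m H) (i : Fin n) (k : Fin K) : H i k ≤ 1 := by
  rcases hH.1 i k with h | h <;> simp [h]

lemma sq_eq (hH : IsClusteringMatrix m H) (i : Fin n) (k : Fin K) : H i k ^ 2 = H i k := by
  rcases hH.1 i k with h | h <;> simp [h]

lemma card_eq (hH : IsClusteringMatrix m H) : (n : ℝ) = K * m := by
  calc (n : ℝ) = ∑ i, ∑ k, H i k := by simp [hH.2.1]
    _ = ∑ k, ∑ i, H i k := Finset.sum_comm
    _ = K * m := by simp [hH.2.2]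

lemma submatrix_perm (hH : IsClusteringMatrix m H) (π : Equiv.Perm (Fin K)) :
    IsClusteringMatrix m (H.submatrix id π) :=
  ⟨fun i k => hH.1 i (π k), fun i => (Equiv.sum_comp π (H i)).trans (hH.2.1 i),
    fun k => hH.2.2 (π k)⟩

variable {HB : Matrix (Fin n) (Fin K) ℝ}

lemma transpose_mul_apply_nonneg (hH : IsClusteringMatrix m H) (hHB : IsClusteringMatrix m HB)
    (k l : Fin K) : 0 ≤ (Hᵀ * HB) k l := by
  rw [mul_apply]
  exact Finset.sum_nonneg fun i _ => mul_nonneg (hH.nonneg_s11 i k) (hHB.nonneg_s11 i l)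

lemma sum_transpose_mul_apply (hH : IsClusteringMatrix m H) (hHB : IsClusteringMatrix m HB)
    (k : Fin K) : ∑ l, (Hᵀ * HB) k l = m := by
  simp only [mul_apply, transpose_apply]
  rw [Finset.sum_comm]
  simp [← Finset.mul_sum, hHB.2.1, hH.2.2]

lemma transpose_mul_apply_self_le (hH : IsClusteringMatrix m H) (hHB : IsClusteringMatrix m HB)
    (k : Fin K) : (Hᵀ * HB) k k ≤ m := by
  rw [← hH.2.2 k, mul_apply]
  exact Finset.sum_le_sum fun i _ => mul_le_of_le_one_right (hH.nonneg_s11 i k) (hHB.le_one i k)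

end IsClusteringMatrix

section Blocks

variable {n K d : ℕ}

lemma frobNorm_sq_eq_sum_blockOf (X : Matrix (Fin n × Fin d) (Fin K × Fin d) ℝ) :
    frobNorm X ^ 2 = ∑ i, ∑ k, frobNorm (blockOf X i k) ^ 2 := by
  simp only [frobNorm_sq, blockOf, Fintype.sum_prod_type]
  exact Finset.sum_congr rfl fun i _ => Finset.sum_comm

lemma trace_eq_sum_blockOf (X : Matrix (Fin K × Fin d) (Fin K × Fin d) ℝ) :
    trace X = ∑ k, trace (blockOf X k k) := by
  simp [trace, blockOf, Fintype.sum_prod_type]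

lemma blockOf_sub_smul_one (X : Matrix (Fin K × Fin d) (Fin K × Fin d) ℝ) (c : ℝ) (k l : Fin K) :
    blockOf (X - c • 1) k l = blockOf X k l - if k = l then c • 1 else 0 := by
  ext a b
  by_cases h : k = l <;> simp [blockOf, one_apply, h]

lemma frobNorm_sub_smul_one_sq_eq_sum (X : Matrix (Fin K × Fin d) (Fin K × Fin d) ℝ) (c : ℝ) :
    frobNorm (X - c • 1) ^ 2 = ∑ k, (frobNorm (blockOf X k k - c • 1) ^ 2
      + ∑ l ∈ Finset.univ.erase k, frobNorm (blockOf X k l) ^ 2) := by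
  rw [frobNorm_sq_eq_sum_blockOf]
  refine Finset.sum_congr rfl fun k _ => ?_
  rw [← Finset.add_sum_erase _ _ (Finset.mem_univ k), blockOf_sub_smul_one, if_pos rfl]
  refine congrArg _ (Finset.sum_congr rfl fun l hl => ?_)
  rw [blockOf_sub_smul_one, if_neg (Finset.ne_of_mem_erase hl).symm, sub_zero]

def blockMat (H : Matrix (Fin n) (Fin K) ℝ) (T : Fin n → Fin K → Matrix (Fin d) (Fin d) ℝ) :
    Matrix (Fin n × Fin d) (Fin K × Fin d) ℝ :=
  fun p q => H p.1 q.1 * T p.1 q.1 p.2 q.2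

lemma blockOf_blockMat (H : Matrix (Fin n) (Fin K) ℝ)
    (T : Fin n → Fin K → Matrix (Fin d) (Fin d) ℝ) (i : Fin n) (k : Fin K) :
    blockOf (blockMat H T) i k = H i k • T i k := rfl

lemma blockOf_transpose_mul_blockMat (HA HB : Matrix (Fin n) (Fin K) ℝ)
    (TA TB : Fin n → Fin K → Matrix (Fin d) (Fin d) ℝ) (k l : Fin K) :
    blockOf ((blockMat HA TA)ᵀ * blockMat HB TB) k l
      = ∑ i, (HA i k * HB i l) • ((TA i k)ᵀ * TB i l) := by
  ext a b
  simp only [blockOf, blockMat, mul_apply, transpose_apply, Fintype.sum_prod_type, Matrix.sum_apply,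
    Matrix.smul_apply, smul_eq_mul, Finset.mul_sum]
  exact Finset.sum_congr rfl fun i _ => Finset.sum_congr rfl fun c _ => by ring

end Blocks

section PK

variable {K d : ℕ} {G : Matrix (Fin d) (Fin d) ℝ → Prop}

lemma InPK.mul (hG : ∀ A B, G A → G B → G (A * B))
    {A B : Matrix (Fin K × Fin d) (Fin K × Fin d) ℝ} (hA : InPK G A) (hB : InPK G B) :
    InPK G (A * B) := by
  obtain ⟨U, σ, hU, hA⟩ := hA
  obtain ⟨W, τ, hW, hB⟩ := hB
  refine ⟨fun a => U a * W (σ.symm a), σ * τ, fun a => hG _ _ (hU a) (hW _), ?_⟩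
  rintro ⟨a, x⟩ ⟨b, y⟩
  by_cases h : a = σ (τ b)
  · subst h
    simp [mul_apply, Fintype.sum_prod_type, hA, hB]
  · simp [mul_apply, Fintype.sum_prod_type, hA, hB, h]

def diagBlocks (D : Fin K → Matrix (Fin d) (Fin d) ℝ) :
    Matrix (Fin K × Fin d) (Fin K × Fin d) ℝ :=
  fun p q => if p.1 = q.1 then D p.1 p.2 q.2 else 0

lemma inPK_diagBlocks {D : Fin K → Matrix (Fin d) (Fin d) ℝ} (hD : ∀ k, G (D k)) :
    InPK G (diagBlocks D) :=
  ⟨D, 1, hD, fun _ _ => rfl⟩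

lemma trace_transpose_diagBlocks_mul (D : Fin K → Matrix (Fin d) (Fin d) ℝ)
    (M : Matrix (Fin K × Fin d) (Fin K × Fin d) ℝ) :
    trace ((diagBlocks D)ᵀ * M) = ∑ k, trace ((D k)ᵀ * blockOf M k k) := by
  simp [trace, diagBlocks, blockOf, mul_apply, Fintype.sum_prod_type]

end PK

section OrthoClustered

variable {n K d m : ℕ}

def IsOrthoClustered (m : ℕ) (X : Matrix (Fin n × Fin d) (Fin K × Fin d) ℝ) : Prop :=
  ∃ (H : Matrix (Fin n) (Fin K) ℝ) (T : Fin n → Fin K → Matrix (Fin d) (Fin d) ℝ),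
    IsClusteringMatrix m H ∧ (∀ i k, IsOrthoMat (T i k)) ∧ X = blockMat H T

lemma InFeas.isOrthoClustered {G : Matrix (Fin d) (Fin d) ℝ → Prop}
    (hG : ∀ A, G A → IsOrthoMat A) {X : Matrix (Fin n × Fin d) (Fin K × Fin d) ℝ}
    (hX : InFeas m G X) : IsOrthoClustered m X := by
  obtain ⟨R, H, hR, hH, rfl⟩ := hX
  exact ⟨H, fun i _ => R i, hH, fun i _ => hG _ (hR i), rfl⟩

namespace IsOrthoClustered

variable {X : Matrix (Fin n × Fin d) (Fin K × Fin d) ℝ}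

lemma frobNorm_sq (hX : IsOrthoClustered m X) : frobNorm X ^ 2 = K * m * d := by
  obtain ⟨H, T, hH, hT, rfl⟩ := hX
  rw [frobNorm_sq_eq_sum_blockOf, ← hH.card_eq]
  simp [blockOf_blockMat, frobNorm_smul, mul_pow, hH.sq_eq, fun i k => (hT i k).frobNorm_sq,
    ← Finset.sum_mul, hH.2.1]

lemma mul_inPK (hX : IsOrthoClustered m X) {Q : Matrix (Fin K × Fin d) (Fin K × Fin d) ℝ}
    (hQ : InPK IsOrthoMat Q) : IsOrthoClustered m (X * Q) := by
  obtain ⟨H, T, hH, hT, rfl⟩ := hX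
  obtain ⟨U, π, hU, hQ⟩ := hQ
  refine ⟨H.submatrix id π, fun i k => T i (π k) * U (π k), hH.submatrix_perm π,
    fun i k => (hT _ _).mul (hU _), ?_⟩
  ext ⟨i, a⟩ ⟨k, b⟩
  simp [blockMat, mul_apply, Fintype.sum_prod_type, hQ, Finset.mul_sum, mul_assoc]

end IsOrthoClustered

lemma trace_blockOf_le_of_isMin {X V : Matrix (Fin n × Fin d) (Fin K × Fin d) ℝ}
    {Q : Matrix (Fin K × Fin d) (Fin K × Fin d) ℝ} (hX : IsOrthoClustered m X)
    (hQ : InPK IsOrthoMat Q)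
    (hQmin : ∀ Q', InPK IsOrthoMat Q' → frobNorm (V - X * Q) ≤ frobNorm (V - X * Q'))
    (k : Fin K) {O : Matrix (Fin d) (Fin d) ℝ} (hO : IsOrthoMat O) :
    trace (Oᵀ * blockOf ((X * Q)ᵀ * V) k k) ≤ trace (blockOf ((X * Q)ᵀ * V) k k) := by
  set M := (X * Q)ᵀ * V
  set D : Fin K → Matrix (Fin d) (Fin d) ℝ := Function.update 1 k O
  have hD : ∀ l, IsOrthoMat (D l) := fun l => by
    rcases eq_or_ne l k with rfl | h
    · simpa [D] using hO
    · simp [D, h, IsOrthoMat]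
  have hQD : InPK IsOrthoMat (Q * diagBlocks D) :=
    hQ.mul (fun _ _ => IsOrthoMat.mul) (inPK_diagBlocks hD)
  have htrace : trace ((diagBlocks D)ᵀ * M) ≤ trace M := by
    have hM : (X * (Q * diagBlocks D))ᵀ * V = (diagBlocks D)ᵀ * M := by
      rw [← Matrix.mul_assoc, transpose_mul, Matrix.mul_assoc]
    -- The type is written out so that `X * _` uses `Matrix`'s multiplication instance: in
    -- `hQmin` it elaborates to `CStarMatrix`'s, which `rw` does not see through.
    have h : frobNorm (V - X * Q) ^ 2 ≤ frobNorm (V - X * (Q * diagBlocks D)) ^ 2 :=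
      pow_le_pow_left₀ (frobNorm_nonneg _) (hQmin _ hQD) 2
    rw [frobNorm_sub_sq, frobNorm_sub_sq, (hX.mul_inPK hQ).frobNorm_sq,
      (hX.mul_inPK hQD).frobNorm_sq, hM] at h
    linarith
  rw [trace_transpose_diagBlocks_mul, trace_eq_sum_blockOf M,
    ← Finset.add_sum_erase _ _ (Finset.mem_univ k),
    ← Finset.add_sum_erase _ _ (Finset.mem_univ k)] at htrace
  have hrest : ∀ l ∈ Finset.univ.erase k,
      trace ((D l)ᵀ * blockOf M l l) = trace (blockOf M l l) := fun l hl => by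
    simp [D, Finset.ne_of_mem_erase hl]
  rw [Finset.sum_congr rfl hrest] at htrace
  simp only [D, Function.update_self] at htrace
  linarith

end OrthoClustered

section KeyInequality

variable {n K d m : ℕ} {HA HB : Matrix (Fin n) (Fin K) ℝ}
  {TA TB : Fin n → Fin K → Matrix (Fin d) (Fin d) ℝ}

lemma frobNorm_blockOf_transpose_mul_blockMat_le (hHA : IsClusteringMatrix m HA)
    (hHB : IsClusteringMatrix m HB) (hTA : ∀ i k, IsOrthoMat (TA i k))
    (hTB : ∀ i k, IsOrthoMat (TB i k)) (k l : Fin K) :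
    frobNorm (blockOf ((blockMat HA TA)ᵀ * blockMat HB TB) k l) ≤ (HAᵀ * HB) k l * √d := by
  rw [blockOf_transpose_mul_blockMat, mul_apply, Finset.sum_mul]
  refine (frobNorm_sum_le _ _).trans_eq (Finset.sum_congr rfl fun i _ => ?_)
  rw [frobNorm_smul, abs_of_nonneg (mul_nonneg (hHA.nonneg_s11 i k) (hHB.nonneg_s11 i l)),
    ((hTA i k).transpose.mul (hTB i l)).frobNorm_eq_s11, transpose_apply]

lemma dotProduct_blockOf_transpose_mul_blockMat_mulVec_le (hHA : IsClusteringMatrix m HA)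
    (hHB : IsClusteringMatrix m HB) (hTA : ∀ i k, IsOrthoMat (TA i k))
    (hTB : ∀ i k, IsOrthoMat (TB i k)) (k : Fin K) (x : Fin d → ℝ) :
    x ⬝ᵥ blockOf ((blockMat HA TA)ᵀ * blockMat HB TB) k k *ᵥ x ≤ (HAᵀ * HB) k k * (x ⬝ᵥ x) := by
  rw [blockOf_transpose_mul_blockMat, sum_mulVec, dotProduct_sum, mul_apply, Finset.sum_mul]
  refine Finset.sum_le_sum fun i _ => ?_
  rw [smul_mulVec, dotProduct_smul, smul_eq_mul, transpose_apply]
  exact mul_le_mul_of_nonneg_left ((hTA i k).dotProduct_mulVec_transpose_mul_le (hTB i k) x)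
    (mul_nonneg (hHA.nonneg_s11 i k) (hHB.nonneg_s11 i k))

lemma sum_erase_frobNorm_sq_blockOf_le (hHA : IsClusteringMatrix m HA)
    (hHB : IsClusteringMatrix m HB) (hTA : ∀ i k, IsOrthoMat (TA i k))
    (hTB : ∀ i k, IsOrthoMat (TB i k)) (k : Fin K) :
    ∑ l ∈ Finset.univ.erase k, frobNorm (blockOf ((blockMat HA TA)ᵀ * blockMat HB TB) k l) ^ 2
      ≤ (m - (HAᵀ * HB) k k) ^ 2 * d := by
  calc _ ≤ ∑ l ∈ Finset.univ.erase k, (HAᵀ * HB) k l ^ 2 * d :=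
        Finset.sum_le_sum fun l _ => by
          calc _ ≤ ((HAᵀ * HB) k l * √d) ^ 2 := pow_le_pow_left₀ (frobNorm_nonneg _)
                (frobNorm_blockOf_transpose_mul_blockMat_le hHA hHB hTA hTB k l) 2
            _ = _ := by rw [mul_pow, Real.sq_sqrt (Nat.cast_nonneg d)]
    _ ≤ (∑ l ∈ Finset.univ.erase k, (HAᵀ * HB) k l) ^ 2 * d := by
        rw [← Finset.sum_mul]
        gcongr
        exact Finset.sum_sq_le_sq_sum_of_nonneg fun l _ => hHA.transpose_mul_apply_nonneg hHB k l
    _ = (m - (HAᵀ * HB) k k) ^ 2 * d := by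
        rw [Finset.sum_erase_eq_sub (Finset.mem_univ k), hHA.sum_transpose_mul_apply hHB]

lemma frobNorm_blockOf_sub_smul_one_sq_le (hHA : IsClusteringMatrix m HA)
    (hHB : IsClusteringMatrix m HB) (hTA : ∀ i k, IsOrthoMat (TA i k))
    (hTB : ∀ i k, IsOrthoMat (TB i k)) (k : Fin K)
    (hmax : ∀ O, IsOrthoMat O → trace (Oᵀ * blockOf ((blockMat HA TA)ᵀ * blockMat HB TB) k k)
      ≤ trace (blockOf ((blockMat HA TA)ᵀ * blockMat HB TB) k k)) :
    frobNorm (blockOf ((blockMat HA TA)ᵀ * blockMat HB TB) k k - (m : ℝ) • 1) ^ 2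
      ≤ (m * d - trace (blockOf ((blockMat HA TA)ᵀ * blockMat HB TB) k k)) ^ 2 := by
  simpa using frobNorm_sub_smul_one_sq_le (isSymm_of_trace_le hmax) fun x =>
    (dotProduct_blockOf_transpose_mul_blockMat_mulVec_le hHA hHB hTA hTB k x).trans
      (mul_le_mul_of_nonneg_right (hHA.transpose_mul_apply_self_le hHB k)
        (dotProduct_self_nonneg x))

lemma sub_mul_le_sub_trace_blockOf (hHA : IsClusteringMatrix m HA)
    (hHB : IsClusteringMatrix m HB) (hTA : ∀ i k, IsOrthoMat (TA i k))
    (hTB : ∀ i k, IsOrthoMat (TB i k)) (k : Fin K) :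
    (m - (HAᵀ * HB) k k) * d
      ≤ m * d - trace (blockOf ((blockMat HA TA)ᵀ * blockMat HB TB) k k) := by
  have := trace_le_of_dotProduct_mulVec_le
    (dotProduct_blockOf_transpose_mul_blockMat_mulVec_le hHA hHB hTA hTB k)
  simp only [Fintype.card_fin] at this
  linarith

lemma frobNorm_sq_blockOf_row_le (hd : 0 < d) (hHA : IsClusteringMatrix m HA)
    (hHB : IsClusteringMatrix m HB) (hTA : ∀ i k, IsOrthoMat (TA i k))
    (hTB : ∀ i k, IsOrthoMat (TB i k)) (k : Fin K)
    (hmax : ∀ O, IsOrthoMat O → trace (Oᵀ * blockOf ((blockMat HA TA)ᵀ * blockMat HB TB) k k)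
      ≤ trace (blockOf ((blockMat HA TA)ᵀ * blockMat HB TB) k k)) :
    frobNorm (blockOf ((blockMat HA TA)ᵀ * blockMat HB TB) k k - (m : ℝ) • 1) ^ 2
      + ∑ l ∈ Finset.univ.erase k, frobNorm (blockOf ((blockMat HA TA)ᵀ * blockMat HB TB) k l) ^ 2
      ≤ (1 + 1 / d) * (m * d - trace (blockOf ((blockMat HA TA)ᵀ * blockMat HB TB) k k)) ^ 2 := by
  have hdR : (0 : ℝ) < d := Nat.cast_pos.mpr hd
  have hoff : ((m : ℝ) - (HAᵀ * HB) k k) ^ 2 * d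
      ≤ (m * d - trace (blockOf ((blockMat HA TA)ᵀ * blockMat HB TB) k k)) ^ 2 / d := by
    rw [le_div_iff₀ hdR]
    nlinarith [sub_mul_le_sub_trace_blockOf hHA hHB hTA hTB k,
      mul_nonneg (sub_nonneg.mpr (hHA.transpose_mul_apply_self_le hHB k)) hdR.le]
  have hdiag := frobNorm_blockOf_sub_smul_one_sq_le hHA hHB hTA hTB k hmax
  have hrest := sum_erase_frobNorm_sq_blockOf_le hHA hHB hTA hTB k
  rw [add_mul, one_mul, one_div_mul_eq_div]
  linarith

end KeyInequality

theorem frobNorm_transpose_mul_sub_smul_one_sq_le {n K d m : ℕ}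
    {X Y : Matrix (Fin n × Fin d) (Fin K × Fin d) ℝ}
    (hX : IsOrthoClustered m X) (hY : IsOrthoClustered m Y)
    (hmax : ∀ k O, IsOrthoMat O →
      trace (Oᵀ * blockOf (Xᵀ * Y) k k) ≤ trace (blockOf (Xᵀ * Y) k k)) :
    frobNorm (Xᵀ * Y - (m : ℝ) • 1) ^ 2 ≤ (1 + 1 / d) * (K * m * d - trace (Xᵀ * Y)) ^ 2 := by
  rcases Nat.eq_zero_or_pos d with rfl | hd
  · simp [frobNorm]
  obtain ⟨HA, TA, hHA, hTA, rfl⟩ := hX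
  obtain ⟨HB, TB, hHB, hTB, rfl⟩ := hY
  set M := (blockMat HA TA)ᵀ * blockMat HB TB
  set δ : Fin K → ℝ := fun k => m * d - trace (blockOf M k k)
  have hδ_nonneg : ∀ k, 0 ≤ δ k := fun k =>
    (mul_nonneg (sub_nonneg.mpr (hHA.transpose_mul_apply_self_le hHB k)) d.cast_nonneg).trans
      (sub_mul_le_sub_trace_blockOf hHA hHB hTA hTB k)
  calc frobNorm (M - (m : ℝ) • 1) ^ 2
      = ∑ k, (frobNorm (blockOf M k k - (m : ℝ) • 1) ^ 2
          + ∑ l ∈ Finset.univ.erase k, frobNorm (blockOf M k l) ^ 2) :=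
        frobNorm_sub_smul_one_sq_eq_sum M m
    _ ≤ ∑ k, (1 + 1 / d) * δ k ^ 2 := Finset.sum_le_sum fun k _ =>
        frobNorm_sq_blockOf_row_le hd hHA hHB hTA hTB k (hmax k)
    _ ≤ (1 + 1 / d) * (∑ k, δ k) ^ 2 := by
        rw [← Finset.mul_sum]
        gcongr
        exact Finset.sum_sq_le_sq_sum_of_nonneg fun k _ => hδ_nonneg k
    _ = (1 + 1 / d) * (K * m * d - trace M) ^ 2 := by
        simp only [δ, trace_eq_sum_blockOf M, Finset.sum_sub_distrib, Finset.sum_const,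
          Finset.card_univ, Fintype.card_fin, nsmul_eq_mul]
        ring

theorem frobNorm_transpose_mul_sub_smul_one_le {n K d m : ℕ}
    {X Y : Matrix (Fin n × Fin d) (Fin K × Fin d) ℝ}
    (hX : IsOrthoClustered m X) (hY : IsOrthoClustered m Y)
    (hmax : ∀ k O, IsOrthoMat O →
      trace (Oᵀ * blockOf (Xᵀ * Y) k k) ≤ trace (blockOf (Xᵀ * Y) k k)) :
    frobNorm (Xᵀ * Y - (m : ℝ) • 1) ≤ √(1 + 1 / d) * (frobNorm (Y - X) ^ 2 / 2) := by
  have hdist : frobNorm (Y - X) ^ 2 / 2 = K * m * d - trace (Xᵀ * Y) := by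
    rw [frobNorm_sub_sq, hX.frobNorm_sq, hY.frobNorm_sq]
    ring
  refine le_of_pow_le_pow_left₀ two_ne_zero (by positivity) ?_
  rw [mul_pow, Real.sq_sqrt (by positivity), hdist]
  exact frobNorm_transpose_mul_sub_smul_one_sq_le hX hY hmax

lemma mul_frobNorm_one_div_smul_sub_one_le {ι : Type*} [Fintype ι] [DecidableEq ι] {c : ℝ}
    (hc : 0 ≤ c) (M : Matrix ι ι ℝ) : c * frobNorm ((1 / c) • M - 1) ≤ frobNorm (M - c • 1) := by
  rcases hc.eq_or_lt with rfl | hc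
  · -- `1 / 0 = 0`, so the left side is `0`
    simp [frobNorm_nonneg]
  refine le_of_eq ?_
  calc c * frobNorm ((1 / c) • M - 1) = frobNorm (c • ((1 / c) • M - 1)) := by
        rw [frobNorm_smul, abs_of_pos hc]
    _ = frobNorm (M - c • 1) := by
        rw [smul_sub, smul_smul, mul_one_div_cancel hc.ne', one_smul]

theorem stmt11_general {n K d m : ℕ}
    (G : Matrix (Fin d) (Fin d) ℝ → Prop)
    (hG : G = (IsOrthoMat (d := d)) ∨ G = (IsSpecOrthoMat (d := d)))
    (Vstar V : Matrix (Fin n × Fin d) (Fin K × Fin d) ℝ)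
    (hVstar : InFeas m G Vstar) (hV : InF m V)
    (ρ : ℝ)
    (Q : Matrix (Fin K × Fin d) (Fin K × Fin d) ℝ) (hQ : InPK IsOrthoMat Q)
    (hQmin : ∀ Q', InPK IsOrthoMat Q' →
      frobNorm (V - Vstar * Q) ≤ frobNorm (V - Vstar * Q'))
    (hsmall : frobNorm (V - Vstar * Q) ≤ Real.sqrt m / ρ) :
    (m : ℝ) * frobNorm ((1 / (m : ℝ)) • ((Vstar * Q)ᵀ * V) - 1)
      ≤ (1/2) * Real.sqrt (1 + 1/(d : ℝ)) * (Real.sqrt m / ρ)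
          * frobNorm (V - Vstar * Q) := by
  have hGO : ∀ A, G A → IsOrthoMat A := by
    rcases hG with rfl | rfl
    exacts [fun _ h => h, fun _ h => h.1]
  have hW := hVstar.isOrthoClustered hGO
  have hbound := frobNorm_transpose_mul_sub_smul_one_le (hW.mul_inPK hQ)
    (hV.isOrthoClustered fun _ h => h) fun k _ hO => trace_blockOf_le_of_isMin hW hQ hQmin k hO
  have hε : frobNorm (V - Vstar * Q) ^ 2 ≤ (√m / ρ) * frobNorm (V - Vstar * Q) := by
    rw [sq]
    exact mul_le_mul_of_nonneg_right hsmall (frobNorm_nonneg _)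
  calc (m : ℝ) * frobNorm ((1 / (m : ℝ)) • ((Vstar * Q)ᵀ * V) - 1)
      ≤ frobNorm ((Vstar * Q)ᵀ * V - (m : ℝ) • 1) :=
        mul_frobNorm_one_div_smul_sub_one_le m.cast_nonneg _
    _ ≤ √(1 + 1 / d) * (frobNorm (V - Vstar * Q) ^ 2 / 2) := hbound
    _ ≤ 1 / 2 * √(1 + 1 / d) * (√m / ρ) * frobNorm (V - Vstar * Q) := by
        nlinarith [Real.sqrt_nonneg (1 + 1 / (d : ℝ))]

/-- let `V* ∈ E`, `V ∈ F`, `ρ > 0`, and let `Q` minimize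
`‖V - V* Q'‖_F` over `Q' ∈ P_K(O(d))`. Set `Z = (1/m) (V* Q)ᵀ V`. If
`‖V - V* Q‖_F ≤ √m / ρ` then
`m ‖Z - I‖_F ≤ (1/2) √(1 + 1/d) (√m/ρ) ‖V - V* Q‖_F`. -/
theorem stmt11 {n K d m : ℕ} (hm : 0 < m)
    (G : Matrix (Fin d) (Fin d) ℝ → Prop)
    (hG : G = (IsOrthoMat (d := d)) ∨ G = (IsSpecOrthoMat (d := d)))
    (Vstar V : Matrix (Fin n × Fin d) (Fin K × Fin d) ℝ)
    (hVstar : InFeas m G Vstar) (hV : InF m V)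
    (ρ : ℝ) (hρ : 0 < ρ)
    (Q : Matrix (Fin K × Fin d) (Fin K × Fin d) ℝ) (hQ : InPK IsOrthoMat Q)
    (hQmin : ∀ Q', InPK IsOrthoMat Q' →
      frobNorm (V - Vstar * Q) ≤ frobNorm (V - Vstar * Q'))
    (hsmall : frobNorm (V - Vstar * Q) ≤ Real.sqrt m / ρ) :
    (m : ℝ) * frobNorm ((1 / (m : ℝ)) • ((Vstar * Q)ᵀ * V) - 1)
      ≤ (1/2) * Real.sqrt (1 + 1/(d : ℝ)) * (Real.sqrt m / ρ)
          * frobNorm (V - Vstar * Q) :=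
  stmt11_general G hG Vstar V hVstar hV ρ Q hQ hQmin hsmall
end

section
/- If Q, Q' ∈ O(d) satisfy det(Q)·det(Q') = −1 (i.e., exactly one of them lies in SO(d)), then ‖Q − Q'‖_F ≥ √2. -/
open Matrix BigOperators Finset

/-!
`S = Qᵀ Q'` is orthogonal with `det S = -1`, so `det (1 + S) = det (S (1 + S)ᵀ) = -det (1 + S)`
vanishes and `S x = -x` for some `x ≠ 0`, i.e. `Q' x = -Q x`. Then `(Q - Q') x = 2 Q x` has
squared length `4 ‖x‖²`, while Cauchy–Schwarz bounds it by `‖Q - Q'‖_F² ‖x‖²`. Hence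
`‖Q - Q'‖_F ≥ 2 ≥ √2`.
-/

namespace Matrix

variable {n : Type*} [Fintype n]

section Ordered

variable {R : Type*} [CommRing R] [LinearOrder R] [IsStrictOrderedRing R]

theorem dotProduct_mulVec_self_le_sum_sq_mul (A : Matrix n n R) (x : n → R) :
    A *ᵥ x ⬝ᵥ A *ᵥ x ≤ (∑ i, ∑ j, A i j ^ 2) * (x ⬝ᵥ x) := by
  rw [Finset.sum_mul]
  refine Finset.sum_le_sum fun i _ => ?_
  simpa only [mulVec, dotProduct, pow_two] using Finset.sum_mul_sq_le_sq_mul_sq univ (A i) x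

theorem le_sum_sq_of_dotProduct_mulVec_self_eq {A : Matrix n n R} {x : n → R} {c : R}
    (hx : x ≠ 0) (hc : A *ᵥ x ⬝ᵥ A *ᵥ x = c * (x ⬝ᵥ x)) : c ≤ ∑ i, ∑ j, A i j ^ 2 := by
  have hpos : 0 < x ⬝ᵥ x :=
    (Finset.sum_nonneg fun i _ => mul_self_nonneg (x i)).lt_of_ne'
      (dotProduct_self_eq_zero.not.mpr hx)
  exact le_of_mul_le_mul_right (hc ▸ dotProduct_mulVec_self_le_sum_sq_mul A x) hpos

end Ordered

theorem dotProduct_mulVec_self_of_transpose_mul_self {R : Type*} [CommRing R]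
    [DecidableEq n] {Q : Matrix n n R} (hQ : Qᵀ * Q = 1) (x : n → R) :
    Q *ᵥ x ⬝ᵥ Q *ᵥ x = x ⬝ᵥ x := by
  nth_rw 1 [← vecMul_transpose]
  rw [← dotProduct_mulVec, mulVec_mulVec, hQ, one_mulVec]

variable [DecidableEq n] {K : Type*} [Field K] [CharZero K]

theorem det_one_add_eq_zero_of_det_eq_neg_one {S : Matrix n n K} (hS : S * Sᵀ = 1)
    (hdet : S.det = -1) : (1 + S).det = 0 := by
  have h : (1 + S).det = -(1 + S).det := by
    calc (1 + S).det = (S * (1 + S)ᵀ).det := by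
          rw [transpose_add, transpose_one, mul_add, hS, mul_one, add_comm]
    _ = -(1 + S).det := by rw [det_mul, det_transpose, hdet, neg_one_mul]
  exact self_eq_neg.mp h

theorem exists_mulVec_eq_neg_self_of_det_eq_neg_one {S : Matrix n n K} (hS : S * Sᵀ = 1)
    (hdet : S.det = -1) : ∃ x ≠ 0, S *ᵥ x = -x := by
  obtain ⟨x, hx0, hx⟩ :=
    exists_mulVec_eq_zero_iff.mpr (det_one_add_eq_zero_of_det_eq_neg_one hS hdet)
  rw [add_mulVec, one_mulVec] at hx
  exact ⟨x, hx0, eq_neg_of_add_eq_zero_right hx⟩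

theorem exists_mulVec_eq_neg_mulVec_of_det_mul_det_eq_neg_one {Q Q' : Matrix n n K}
    (hQ : Q * Qᵀ = 1) (hQ' : Q' * Q'ᵀ = 1) (hdet : Q.det * Q'.det = -1) :
    ∃ x ≠ 0, Q' *ᵥ x = -(Q *ᵥ x) := by
  have hS : Qᵀ * Q' * (Qᵀ * Q')ᵀ = 1 := by
    rw [transpose_mul, transpose_transpose, mul_assoc, ← mul_assoc Q', hQ', one_mul,
      mul_eq_one_comm.mp hQ]
  obtain ⟨x, hx0, hx⟩ := exists_mulVec_eq_neg_self_of_det_eq_neg_one hS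
    (by rw [det_mul, det_transpose, hdet])
  refine ⟨x, hx0, ?_⟩
  rw [← mulVec_mulVec] at hx
  calc Q' *ᵥ x = (Q * Qᵀ) *ᵥ Q' *ᵥ x := by rw [hQ, one_mulVec]
  _ = -(Q *ᵥ x) := by rw [← mulVec_mulVec, hx, mulVec_neg]

end Matrix

/-- if `Q, Q' ∈ O(d)` and `det Q · det Q' = -1`, then
`‖Q - Q'‖_F ≥ √2`. -/
theorem stmt16 {d : ℕ} (Q Q' : Matrix (Fin d) (Fin d) ℝ)
    (hQ : IsOrthoMat Q) (hQ' : IsOrthoMat Q') (h : Q.det * Q'.det = -1) :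
    Real.sqrt 2 ≤ frobNorm (Q - Q') := by
  obtain ⟨x, hx0, hx⟩ := exists_mulVec_eq_neg_mulVec_of_det_mul_det_eq_neg_one hQ.1 hQ'.1 h
  have hdiff : (Q - Q') *ᵥ x = (2 : ℝ) • Q *ᵥ x := by
    rw [sub_mulVec, hx, sub_neg_eq_add, two_smul]
  have h4 : (4 : ℝ) ≤ ∑ i, ∑ j, (Q - Q') i j ^ 2 := by
    refine le_sum_sq_of_dotProduct_mulVec_self_eq hx0 ?_
    rw [hdiff, smul_dotProduct, dotProduct_smul, dotProduct_mulVec_self_of_transpose_mul_self hQ.2]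
    simp only [smul_eq_mul]
    ring
  exact Real.sqrt_le_sqrt (by linarith)
end
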